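/- arXiv:0803.2749 — 5 statements merged into one kernel-verified Lean document; each statement's English description precedes it below -/
import Mathlib

section
/- Let A be an m×m matrix with integer entries, m ≥ 1, such that every principal minor of A equals 1 (principal minors include the 1×1 diagonal entries, all determinants of principal submatrices, and det A itself). Then there exists a permutation σ of {1, ..., m} such that the matrix B with B_{ij} = A_{σ(i)σ(j)} is upper triangular with 1's on the diagonal. -/
open Matrix Finset
open scoped Fin.NatCast Fin.CommRing

lemma minor_reindex (m : ℕ) (A : Matrix (Fin m) (Fin m) ℤ)
    (hminor : ∀ S : Finset (Fin m), S.Nonempty →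
      (A.submatrix (fun x : {x // x ∈ S} => (x : Fin m))
        (fun x : {x // x ∈ S} => (x : Fin m))).det = 1)
    {l : ℕ} (hl : 0 < l) (d : Fin l → Fin m) (hd : Function.Injective d) :
    (A.submatrix d d).det = 1 := by
  set S : Finset (Fin m) := Finset.image d Finset.univ with hS
  have hmem : ∀ i, d i ∈ S := fun i => Finset.mem_image_of_mem d (Finset.mem_univ i)
  set d' : Fin l → {x // x ∈ S} := fun i => ⟨d i, hmem i⟩ with hd'
  have hbij : Function.Bijective d' := by
    refine (Fintype.bijective_iff_injective_and_card _).mpr ⟨?_, ?_⟩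
    · intro a b hab
      exact hd (congrArg Subtype.val hab)
    · rw [Fintype.card_coe, hS, Finset.card_image_of_injective _ hd, Finset.card_univ,
        Fintype.card_fin]
  let e := Equiv.ofBijective d' hbij
  have hrw : A.submatrix d d =
      (A.submatrix (fun x : {x // x ∈ S} => (x : Fin m))
        (fun x : {x // x ∈ S} => (x : Fin m))).submatrix e e := by
    ext i j
    simp [e, Equiv.ofBijective, Matrix.submatrix_apply, d']
  rw [hrw, Matrix.det_submatrix_equiv_self]
  exact hminor S ⟨d ⟨0, hl⟩, hmem _⟩

variable {m : ℕ} (A : Matrix (Fin m) (Fin m) ℤ)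

/-- a closed walk with nonzero entries along consecutive (distinct) vertices -/
def IsWC (k : ℕ) [NeZero k] (c : Fin k → Fin m) : Prop :=
  ∀ i : Fin k, A (c i) (c (i+1)) ≠ 0 ∧ c i ≠ c (i+1)

lemma wc_split {k : ℕ} (hk : 2 ≤ k) (c : Fin k → Fin m)
    (hc : @IsWC m A k ⟨by omega⟩ c)
    {i j : Fin k} (hij : i ≠ j) (hcij : c i = c j) :
    ∃ k' : ℕ, 2 ≤ k' ∧ k' < k ∧ ∃ (h2 : NeZero k') (c' : Fin k' → Fin m),
      IsWC A k' c' := by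
  haveI : NeZero k := ⟨by omega⟩
  set d : ℕ := (j - i).val with hd
  have hdj : i + (d : Fin k) = j := by
    rw [hd, Fin.cast_val_eq_self]; ring
  have hd0 : d ≠ 0 := by
    intro h
    apply hij
    rw [h] at hdj; simpa using hdj
  have hdk : d < k := (j - i).isLt
  have hd1 : d ≠ 1 := by
    intro h
    apply (hc i).2
    rw [hcij]
    congr 1
    rw [← hdj, h]
    norm_num
  haveI hd2 : NeZero d := ⟨hd0⟩
  refine ⟨d, by omega, hdk, hd2, fun t => c (i + (t.val : Fin k)), fun t => ?_⟩
  have h1 : (1 : Fin d).val = 1 := by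
    rw [show (1 : Fin d) = ((1:ℕ) : Fin d) by simp, Fin.val_cast_of_lt (by omega)]
  have htv : ((t + 1 : Fin d).val) = if t.val + 1 < d then t.val + 1 else 0 := by
    rw [Fin.add_def, h1]
    rcases Nat.lt_or_ge (t.val + 1) d with h | h
    · show (t.val + 1) % d = _
      rw [Nat.mod_eq_of_lt h]; simp [h]
    · have htd : t.val + 1 = d := by omega
      show (t.val + 1) % d = _
      rw [htd]
      simp [htd]
  by_cases hcase : t.val + 1 < d
  · simp only [htv, hcase, if_true]
    have h2 : ((t.val + 1 : ℕ) : Fin k) = (t.val : Fin k) + 1 := by push_cast; ring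
    rw [h2, ← add_assoc]
    exact hc (i + (t.val : Fin k))
  · have htd : t.val + 1 = d := by omega
    simp only [htv, hcase, if_false]
    have hx1 : i + ((t.val : ℕ) : Fin k) + 1 = j := by
      have h2 : ((t.val + 1 : ℕ) : Fin k) = ((d : ℕ) : Fin k) := by rw [htd]
      push_cast at h2
      rw [add_assoc, h2, hdj]
    have h0 : (((0:ℕ)) : Fin k) = 0 := by simp
    constructor
    · have := (hc (i + (t.val : Fin k))).1
      rw [hx1] at this
      simpa [h0, ← hcij] using this
    · have := (hc (i + (t.val : Fin k))).2
      rw [hx1] at this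
      simpa [h0, ← hcij] using this

lemma det_contra {n : ℕ}
    (hA : ∀ {l : ℕ}, 0 < l → ∀ d : Fin l → Fin m, Function.Injective d →
      (A.submatrix d d).det = 1)
    (hdiag : ∀ x, A x x = 1)
    (c : Fin (n+2) → Fin m) (hcinj : Function.Injective c)
    (hedge : ∀ i : Fin (n+2), A (c i) (c (i + 1)) ≠ 0)
    (hmin : ∀ k', 2 ≤ k' → k' < n+2 → ∀ (h2 : NeZero k') (c' : Fin k' → Fin m),
      ¬ IsWC A k' c') : False := by
  set M : Matrix (Fin (n+2)) (Fin (n+2)) ℤ := A.submatrix c c with hM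
  -- Step 1: nonvanishing terms force σ i ∈ {i, i - 1}
  have step1 : ∀ σ : Equiv.Perm (Fin (n+2)), (∀ i, M (σ i) i ≠ 0) →
      ∀ i, σ i = i ∨ σ i + 1 = i := by
    intro σ hσ i
    by_contra hcon
    push_neg at hcon
    obtain ⟨h1, h2⟩ := hcon
    set d : ℕ := (σ i - i).val with hd
    have hdv : i + (d : Fin (n+2)) = σ i := by rw [hd, Fin.cast_val_eq_self]; ring
    have hd0 : d ≠ 0 := by
      intro h; apply h1; rw [h] at hdv; simpa using hdv.symm
    have hdk1 : d ≠ n + 1 := by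
      intro h
      apply h2
      have hc1 : ((n + 1 : ℕ) : Fin (n+2)) = -1 := by
        have h' : ((n + 1 : ℕ) : Fin (n+2)) + 1 = 0 := by
          rw [show ((n+1:ℕ) : Fin (n+2)) + 1 = ((n+1+1 : ℕ) : Fin (n+2)) by
            push_cast; ring]
          exact_mod_cast Fin.natCast_self (n+2)
        exact eq_neg_of_add_eq_zero_left h'
      rw [h, hc1] at hdv
      show σ i + 1 = i
      rw [← hdv]; ring
    have hdlt : d < n + 2 := (σ i - i).isLt
    haveI hne : NeZero (d + 1) := ⟨by omega⟩
    apply hmin (d + 1) (by omega) (by omega) hne (fun t => c (i + (t.val : Fin (n+2))))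
    intro t
    have h1v : (1 : Fin (d+1)).val = 1 := by
      rw [show (1 : Fin (d+1)) = ((1:ℕ) : Fin (d+1)) by simp,
        Fin.val_cast_of_lt (by omega)]
    have htv : ((t + 1 : Fin (d+1)).val) = if t.val + 1 < d + 1 then t.val + 1 else 0 := by
      rw [Fin.add_def, h1v]
      rcases Nat.lt_or_ge (t.val + 1) (d+1) with h | h
      · show (t.val + 1) % (d+1) = _
        rw [Nat.mod_eq_of_lt h]; simp [h]
      · have htd : t.val + 1 = d + 1 := by omega
        show (t.val + 1) % (d+1) = _
        rw [htd]; simp [htd]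
    have hxne : ∀ x : Fin (n+2), x ≠ x + 1 := by
      intro x hx
      have hval := congrArg Fin.val hx
      rw [Fin.add_def, Fin.val_one] at hval
      simp only [Fin.val_mk] at hval
      have hxlt := x.isLt
      rcases Nat.lt_or_ge (x.val + 1) (n+2) with h | h
      · rw [Nat.mod_eq_of_lt h] at hval; omega
      · have he : x.val + 1 = n + 2 := by omega
        rw [he, Nat.mod_self] at hval; omega
    by_cases hcase : t.val + 1 < d + 1
    · simp only [htv, hcase, if_true]
      have hcast : ((t.val + 1 : ℕ) : Fin (n+2)) = (t.val : Fin (n+2)) + 1 := by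
        push_cast; ring
      rw [hcast, ← add_assoc]
      exact ⟨hedge _, fun hc => hxne _ (hcinj hc)⟩
    · have htd : t.val = d := by omega
      simp only [htv, hcase, if_false]
      have hx0 : ((0:ℕ) : Fin (n+2)) = 0 := by simp
      rw [htd, hx0, add_zero, hdv]
      exact ⟨hσ i, fun hc => h1 (hcinj hc)⟩
  -- Step 2: such σ is either 1 or the rotation inverse
  have step2 : ∀ σ : Equiv.Perm (Fin (n+2)), (∀ i, σ i = i ∨ σ i + 1 = i) →
      σ ≠ 1 → ∀ j, σ j + 1 = j := by
    intro σ hσ hσ1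
    have hone : (1 : Fin (n+2)) ≠ 0 := by
      intro h
      have := congrArg Fin.val h
      rw [Fin.val_one, Fin.val_zero] at this
      omega
    obtain ⟨i₀, hi₀⟩ : ∃ i, σ i ≠ i := by
      by_contra hcon
      push_neg at hcon
      exact hσ1 (Equiv.ext fun x => hcon x)
    have hstep : ∀ i : Fin (n+2), σ i + 1 = i → σ (i - 1) + 1 = i - 1 := by
      intro i hi
      rcases hσ (i - 1) with h | h
      · exfalso
        have hii : σ (i - 1) = σ i := by rw [h, eq_sub_of_add_eq hi]
        have heq := σ.injective hii
        apply hone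
        calc (1 : Fin (n+2)) = i - (i - 1) := by ring
          _ = i - i := by rw [heq]
          _ = 0 := by ring
      · exact h
    have hi₀' : σ i₀ + 1 = i₀ := (hσ i₀).resolve_left hi₀
    have hiter : ∀ t : ℕ, σ (i₀ - (t : Fin (n+2))) + 1 = i₀ - (t : Fin (n+2)) := by
      intro t
      induction t with
      | zero => simpa using hi₀'
      | succ s ih =>
        have hcast : i₀ - ((s+1 : ℕ) : Fin (n+2)) = (i₀ - (s : Fin (n+2))) - 1 := by
          push_cast; ring
        rw [hcast]
        exact hstep _ ih
    intro j
    have := hiter ((i₀ - j).val)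
    rwa [Fin.cast_val_eq_self, show i₀ - (i₀ - j) = j by ring] at this
  -- the rotation
  set γ : Equiv.Perm (Fin (n+2)) := finRotate (n+2) with hγ
  have hγapp : ∀ i : Fin (n+2), γ i = i + 1 := fun i => finRotate_succ_apply i
  set τ : Equiv.Perm (Fin (n+2)) := γ⁻¹ with hτ
  have hτapp : ∀ j : Fin (n+2), τ j = j - 1 := by
    intro j
    rw [hτ, Equiv.Perm.inv_def, Equiv.symm_apply_eq, hγapp]; ring
  have hτne : τ ≠ 1 := by
    intro h
    have h2 := congrArg (fun p : Equiv.Perm (Fin (n+2)) => p 1) h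
    simp only [hτapp, Equiv.Perm.one_apply] at h2
    have h0 : (1 : Fin (n+2)) - 1 = 0 := by ring
    rw [h0] at h2
    have := congrArg Fin.val h2
    rw [Fin.val_one, Fin.val_zero] at this
    omega
  -- terms vanish except 1 and τ
  have hzero : ∀ σ : Equiv.Perm (Fin (n+2)), σ ≠ 1 → σ ≠ τ →
      (∏ i, M (σ i) i) = 0 := by
    intro σ hσ1 hστ
    by_contra hcon
    have hall : ∀ i, M (σ i) i ≠ 0 := fun i =>
      Finset.prod_ne_zero_iff.mp hcon i (Finset.mem_univ i)
    have hshift := step2 σ (step1 σ hall) hσ1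
    apply hστ
    apply Equiv.ext
    intro j
    rw [hτapp]
    exact eq_sub_of_add_eq (hshift j)
  -- compute the determinant
  have hdet : M.det = 1 := hA (by omega) c hcinj
  rw [Matrix.det_apply] at hdet
  have hsum : ∑ σ : Equiv.Perm (Fin (n+2)), Equiv.Perm.sign σ • ∏ i, M (σ i) i
      = ∑ σ ∈ ({1, τ} : Finset (Equiv.Perm (Fin (n+2)))),
          Equiv.Perm.sign σ • ∏ i, M (σ i) i := by
    refine (Finset.sum_subset (Finset.subset_univ _) ?_).symm
    intro σ _ hσ
    simp only [Finset.mem_insert, Finset.mem_singleton] at hσ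
    push_neg at hσ
    rw [hzero σ hσ.1 hσ.2, smul_zero]
  rw [hsum, Finset.sum_pair (Ne.symm hτne)] at hdet
  have hid : (∏ i, M ((1 : Equiv.Perm (Fin (n+2))) i) i) = 1 := by
    apply Finset.prod_eq_one
    intro i _
    simp [hM, hdiag]
  rw [hid] at hdet
  have hprodne : (∏ i, M (τ i) i) ≠ 0 := by
    have hre : (∏ i, M (τ i) i) = ∏ i, M i (i + 1) := by
      rw [← Equiv.prod_comp γ (fun i => M (τ i) i)]
      apply Finset.prod_congr rfl
      intro i _
      rw [hτapp, hγapp]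
      congr 1
      ring
    rw [hre, Finset.prod_ne_zero_iff]
    intro i _
    simpa [hM] using hedge i
  rcases Int.units_eq_one_or (Equiv.Perm.sign τ) with h | h <;>
    rw [h] at hdet <;> simp at hdet <;> exact hprodne hdet


lemma diag_one
    (hA : ∀ {l : ℕ}, 0 < l → ∀ d : Fin l → Fin m, Function.Injective d →
      (A.submatrix d d).det = 1) (x : Fin m) : A x x = 1 := by
  have := hA (l := 1) (by norm_num) (fun _ => x)
    (Function.injective_of_subsingleton _)
  rwa [Matrix.det_fin_one] at this

lemma exists_sink
    (hA : ∀ {l : ℕ}, 0 < l → ∀ d : Fin l → Fin m, Function.Injective d →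
      (A.submatrix d d).det = 1)
    (S : Finset (Fin m)) (hS : S.Nonempty) :
    ∃ r ∈ S, ∀ j ∈ S, j ≠ r → A r j = 0 := by
  by_contra hcon
  push_neg at hcon
  have hf : ∀ x ∈ S, ∃ y ∈ S, y ≠ x ∧ A x y ≠ 0 := by
    intro x hx
    obtain ⟨j, hj, hjne, hjA⟩ := hcon x hx
    exact ⟨j, hj, hjne, hjA⟩
  choose f hfS hfne hfA using hf
  obtain ⟨x₀, hx₀⟩ := hS
  set f' : Fin m → Fin m := fun x => if h : x ∈ S then f x h else x with hf'
  set g : ℕ → Fin m := fun t => f'^[t] x₀ with hg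
  have hgsucc0 : ∀ t, g (t + 1) = f' (g t) := by
    intro t
    rw [hg]
    simp [Function.iterate_succ_apply']
  have hgS : ∀ t, g t ∈ S := by
    intro t
    induction t with
    | zero => exact hx₀
    | succ s ih =>
      rw [hgsucc0, hf']
      simp only [dif_pos ih]
      exact hfS _ ih
  have hgsucc : ∀ t, g (t + 1) = f (g t) (hgS t) := by
    intro t
    rw [hgsucc0, hf']
    simp only [dif_pos (hgS t)]
  have hgedge : ∀ t, A (g t) (g (t+1)) ≠ 0 := by
    intro t; rw [hgsucc]; exact hfA _ _
  have hgne : ∀ t, g (t+1) ≠ g t := by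
    intro t; rw [hgsucc]; exact hfne _ _
  obtain ⟨a, b, hab, hgab⟩ : ∃ a b : ℕ, a < b ∧ g a = g b := by
    obtain ⟨a, b, hne, heq⟩ := Finite.exists_ne_map_eq_of_infinite g
    rcases Nat.lt_or_ge a b with h | h
    · exact ⟨a, b, h, heq⟩
    · exact ⟨b, a, by omega, heq.symm⟩
  have hP : ∃ k, 2 ≤ k ∧ ∃ (h2 : NeZero k) (c : Fin k → Fin m), IsWC A k c := by
    have hba2 : 2 ≤ b - a := by
      rcases Nat.lt_or_ge (b - a) 2 with h | h
      · exfalso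
        have hb : b = a + 1 := by omega
        apply hgne a
        rw [← hb, hgab]
      · exact h
    haveI : NeZero (b - a) := ⟨by omega⟩
    refine ⟨b - a, hba2, ⟨by omega⟩, fun t => g (a + t.val), fun t => ?_⟩
    have h1v : (1 : Fin (b-a)).val = 1 := by
      rw [show (1 : Fin (b-a)) = ((1:ℕ) : Fin (b-a)) by simp,
        Fin.val_cast_of_lt (by omega)]
    have htv : ((t + 1 : Fin (b-a)).val) = if t.val + 1 < b - a then t.val + 1 else 0 := by
      rw [Fin.add_def, h1v]
      rcases Nat.lt_or_ge (t.val + 1) (b-a) with h | h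
      · show (t.val + 1) % (b-a) = _
        rw [Nat.mod_eq_of_lt h]; simp [h]
      · have htd : t.val + 1 = b - a := by omega
        show (t.val + 1) % (b-a) = _
        rw [htd]; simp [htd]
    by_cases hcase : t.val + 1 < b - a
    · simp only [htv, hcase, if_true]
      rw [show a + (t.val + 1) = (a + t.val) + 1 by omega]
      exact ⟨hgedge _, fun h => hgne _ h.symm⟩
    · have htd : t.val + 1 = b - a := by omega
      simp only [htv, hcase, if_false, Nat.add_zero]
      have hb1 : a + t.val + 1 = b := by
        have := t.isLt; omega
      constructor
      · have := hgedge (a + t.val)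
        rwa [hb1, ← hgab] at this
      · have := hgne (a + t.val)
        rw [hb1, ← hgab] at this
        exact fun h => this h.symm
  obtain ⟨k₀, hk₀spec, hk₀min⟩ :
      ∃ k, (2 ≤ k ∧ ∃ (h2 : NeZero k) (c : Fin k → Fin m), IsWC A k c) ∧
        ∀ k' < k, ¬ (2 ≤ k' ∧ ∃ (h2 : NeZero k') (c : Fin k' → Fin m), IsWC A k' c) := by
    classical
    exact ⟨Nat.find hP, Nat.find_spec hP, fun k' h => Nat.find_min hP h⟩
  obtain ⟨hk₀2, hne₀, c, hc⟩ := hk₀spec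
  haveI := hne₀
  have hmin : ∀ k', 2 ≤ k' → k' < k₀ → ∀ (h2 : NeZero k') (c' : Fin k' → Fin m),
      ¬ IsWC A k' c' := by
    intro k' h2 hlt inst c' hc'
    exact hk₀min k' hlt ⟨h2, inst, c', hc'⟩
  have hcinj : Function.Injective c := by
    intro i j hij
    by_contra hne
    obtain ⟨k', h2', hlt', inst', c', hc'⟩ := wc_split A hk₀2 c hc hne hij
    exact hmin k' h2' hlt' inst' c' hc'
  obtain ⟨n, hn⟩ : ∃ n, k₀ = n + 2 := ⟨k₀ - 2, by omega⟩
  subst hn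
  exact det_contra A hA (diag_one A hA) c hcinj (fun i => (hc i).1) hmin

lemma exists_list
    (hA : ∀ {l : ℕ}, 0 < l → ∀ d : Fin l → Fin m, Function.Injective d →
      (A.submatrix d d).det = 1)
    (S : Finset (Fin m)) :
    ∃ l : List (Fin m), l.Nodup ∧ l.toFinset = S ∧
      l.Pairwise (fun x y => A y x = 0) := by
  induction S using Finset.strongInduction with
  | _ S ih =>
    rcases S.eq_empty_or_nonempty with rfl | hS
    · exact ⟨[], List.nodup_nil, by simp, List.Pairwise.nil⟩
    · obtain ⟨r, hrS, hr⟩ := exists_sink A hA S hS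
      obtain ⟨l', hnd', htf', hpw'⟩ := ih (S.erase r) (Finset.erase_ssubset hrS)
      refine ⟨l' ++ [r], ?_, ?_, ?_⟩
      · rw [List.nodup_append]
        refine ⟨hnd', List.nodup_singleton r, ?_⟩
        intro x hx y hy hxy
        have hxr : x = r := by subst hxy; simpa using hy
        have hxe : x ∈ S.erase r := by rw [← htf']; exact List.mem_toFinset.mpr hx
        exact Finset.ne_of_mem_erase hxe hxr
      · rw [List.toFinset_append, htf']
        simp only [List.toFinset_cons, List.toFinset_nil, LawfulSingleton.insert_empty_eq]
        rw [Finset.union_comm, ← Finset.insert_eq, Finset.insert_erase hrS]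
      · rw [List.pairwise_append]
        refine ⟨hpw', List.pairwise_singleton _ _, ?_⟩
        intro x hx y hy
        have hy' : y = r := by simpa using hy
        have hxe : x ∈ S.erase r := by rw [← htf']; exact List.mem_toFinset.mpr hx
        rw [hy']
        exact hr x (Finset.mem_of_mem_erase hxe) (Finset.ne_of_mem_erase hxe)


/-- If all principal minors (including det A itself) of an m×m integer matrix A
equal 1, then A is conjugate by a permutation matrix to a unipotent upper
triangular matrix: there is a permutation σ such that B_{ij} = A_{σ(i)σ(j)} is
upper triangular with 1's on the diagonal. -/
theorem stmt_7 (m : ℕ) (hm : 1 ≤ m) (A : Matrix (Fin m) (Fin m) ℤ)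
    (hminor : ∀ S : Finset (Fin m), S.Nonempty →
      (A.submatrix (fun x : {x // x ∈ S} => (x : Fin m))
        (fun x : {x // x ∈ S} => (x : Fin m))).det = 1) :
    ∃ σ : Equiv.Perm (Fin m),
      (∀ i, A (σ i) (σ i) = 1) ∧ ∀ i j : Fin m, j < i → A (σ i) (σ j) = 0 := by
  have hA : ∀ {l : ℕ}, 0 < l → ∀ d : Fin l → Fin m, Function.Injective d →
      (A.submatrix d d).det = 1 :=
    fun {l} hl d hd => minor_reindex m A hminor hl d hd
  obtain ⟨l, hnd, htf, hpw⟩ := exists_list A hA Finset.univ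
  have hlen : l.length = m := by
    have h1 : l.toFinset.card = l.length := List.toFinset_card_of_nodup hnd
    rw [htf] at h1
    simpa using h1.symm
  set f : Fin m → Fin m := fun i => l.get ⟨i.val, by rw [hlen]; exact i.isLt⟩ with hf
  have hinj : Function.Injective f := by
    intro a b hab
    have hget := List.nodup_iff_injective_get.mp hnd hab
    have := congrArg Fin.val hget
    exact Fin.ext this
  have hbij : Function.Bijective f := (Finite.injective_iff_bijective).mp hinj
  refine ⟨Equiv.ofBijective f hbij, ?_, ?_⟩
  · intro i
    exact diag_one A hA _
  · intro i j hij
    have hpg := List.pairwise_iff_get.mp hpw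
      ⟨j.val, by rw [hlen]; exact j.isLt⟩ ⟨i.val, by rw [hlen]; exact i.isLt⟩ hij
    exact hpg
end

section
/- Let R = ℚ[y_1, ..., y_m]/L where L is the ideal generated by the m polynomials g_k = y_k · ∏_{j=1}^{n_k} (∑_{i=1}^m a^k_{ij} y_i) for k = 1, ..., m, with a^k_{kj} = 1 for all k, j. If x = ∑_{j=1}^m b_j y_j with b_j ≠ 0 for some fixed j, then x^{n_j} ≠ 0 in R. -/
/-!
Send `y_j` to `X` and every other variable to `0`. A generator `g_k` with `k ≠ j` dies, and since
`a^j_{jl} = 1` every linear factor of `g_j` becomes `X`, so `L` maps into `(X ^ (n_j + 1))`. But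
`x ^ n_j` maps to `b_j ^ n_j • X ^ n_j`, which is not divisible by `X ^ (n_j + 1)`.
-/

theorem Polynomial.C_mul_X_pow_notMem_span_X_pow_succ {R : Type*} [CommSemiring R] {c : R}
    (hc : c ≠ 0) (n : ℕ) : C c * X ^ n ∉ Ideal.span {(X : Polynomial R) ^ (n + 1)} := by
  rw [Ideal.mem_span_singleton, X_pow_dvd_iff]
  intro h
  have hcoeff := h n n.lt_succ_self
  rw [coeff_C_mul_X_pow, if_pos rfl] at hcoeff
  exact hc hcoeff

open MvPolynomial

section SingleEval

variable {R S σ : Type*} [CommSemiring R] [CommSemiring S] [Algebra R S] [DecidableEq σ]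

theorem MvPolynomial.aeval_single_linearForm [Fintype σ] (j : σ) (s : S) (b : σ → R) :
    aeval (Pi.single j s) (∑ i, C (b i) * X i) = algebraMap R S (b j) * s := by
  simp [Pi.single_apply]

theorem MvPolynomial.aeval_single_X_mul_of_ne {j k : σ} (hk : k ≠ j) (s : S)
    (q : MvPolynomial σ R) : aeval (Pi.single j s) (X k * q) = 0 := by
  simp [hk]

theorem MvPolynomial.aeval_single_X_mul_prod_linearForm [Fintype σ] {ι : Type*} [Fintype ι]
    (j : σ) (s : S) (a : σ → ι → R) (ha : ∀ l, a j l = 1) :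
    aeval (Pi.single j s) (X j * ∏ l, ∑ i, C (a i l) * X i) = s ^ (Fintype.card ι + 1) := by
  simp [Pi.single_apply, ha, pow_succ', Finset.prod_const]

end SingleEval

theorem stmt_8_general (m : ℕ) (n : Fin m → ℕ)
    (a : (k : Fin m) → Fin m → Fin (n k) → ℚ)
    (ha : ∀ k j, a k k j = 1)
    (L : Ideal (MvPolynomial (Fin m) ℚ))
    (hL : L = Ideal.span
      {p | ∃ k : Fin m, p = X k * ∏ j : Fin (n k), ∑ i : Fin m, C (a k i j) * X i})
    (b : Fin m → ℚ) (j : Fin m) (hb : b j ≠ 0) :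
    (∑ i : Fin m, C (b i) * X i) ^ (n j) ∉ L := by
  set φ := aeval (R := ℚ) (Pi.single j (Polynomial.X : Polynomial ℚ))
  have hmap : Ideal.map φ L ≤ Ideal.span {Polynomial.X ^ (n j + 1)} := by
    rw [hL, Ideal.map_span, Ideal.span_le]
    rintro _ ⟨_, ⟨k, rfl⟩, rfl⟩
    obtain rfl | hk := eq_or_ne k j
    · rw [aeval_single_X_mul_prod_linearForm k _ _ (ha k), Fintype.card_fin]
      exact Ideal.subset_span rfl
    · rw [aeval_single_X_mul_of_ne hk]
      exact zero_mem _
  intro hx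
  have himage := hmap (Ideal.mem_map_of_mem φ hx)
  rw [map_pow, aeval_single_linearForm, Polynomial.algebraMap_eq, mul_pow,
    ← Polynomial.C_pow] at himage
  exact Polynomial.C_mul_X_pow_notMem_span_X_pow_succ (pow_ne_zero _ hb) _ himage

/-- Lemma 7.3: in R = ℚ[y_1,...,y_m]/L, where L is generated by the polynomials
g_k = y_k ∏_{j=1}^{n_k} (∑_i a^k_{ij} y_i) with a^k_{kj} = 1, any linear form
x = ∑ b_j y_j with b_j ≠ 0 satisfies x^{n_j} ≠ 0 in R. -/
theorem stmt_8 (m : ℕ) (n : Fin m → ℕ) (hn : ∀ k, 1 ≤ n k)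
    (a : (k : Fin m) → Fin m → Fin (n k) → ℚ)
    (ha : ∀ k j, a k k j = 1)
    (L : Ideal (MvPolynomial (Fin m) ℚ))
    (hL : L = Ideal.span
      {p | ∃ k : Fin m, p = X k * ∏ j : Fin (n k), ∑ i : Fin m, C (a k i j) * X i})
    (b : Fin m → ℚ) (j : Fin m) (hb : b j ≠ 0) :
    (∑ i : Fin m, C (b i) * X i) ^ (n j) ∉ L :=
  stmt_8_general m n a ha L hL b j hb
end

section
/- Let N ≥ 2 be an integer and let 0 ≤ k_1, k_2 < N. Suppose rationals a_1, a_2 and nonzero rationals b_1, b_2 with b_1 b_2 = 2 satisfy the polynomial identity (a_1 Y_1 + a_2 Y_2)^{N+1} = a_1^{N+1} Y_1^{k_1+1}(Y_1 + b_1 Y_2)^{N−k_1} + a_2^{N+1} Y_2^{k_2+1}(Y_2 + b_2 Y_1)^{N−k_2} in ℚ[Y_1, Y_2]. Then a_1 = a_2 = 0. -/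
/-!
Evaluating the identity at `(Y₁, Y₂) = (1, -b₂)` kills the second summand and turns
`Y₁ + b₁ Y₂` into `-1`, so `(a₁ - a₂ b₂)^(N+1) = ± a₁^(N+1)`, i.e. `a₁ - a₂ b₂ = ± a₁`;
symmetrically `a₂ - a₁ b₁ = ± a₂`. If `a₁, a₂` were not both zero, this forces
`a₂ b₂ = 2 a₁` and `a₁ b₁ = 2 a₂`, hence `b₁ b₂ = 4`, contradicting `b₁ b₂ = 2`.
-/

open MvPolynomial

theorem eq_or_eq_neg_of_pow_eq_neg_one_pow_mul {R : Type*} [Ring R] [LinearOrder R]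
    [IsStrictOrderedRing R] {n : ℕ} (hn : n ≠ 0) (m : ℕ) {x y : R}
    (h : x ^ n = (-1) ^ m * y ^ n) : x = y ∨ x = -y := by
  have habs : |x| ^ n = |y| ^ n := by
    rw [← abs_pow, ← abs_pow, h, abs_mul, abs_neg_one_pow, one_mul]
  exact abs_eq_abs.mp ((pow_left_inj₀ (abs_nonneg x) (abs_nonneg y) hn).mp habs)

theorem sub_mul_pow_eq_neg_one_pow_mul_pow {R σ : Type*} [CommRing R] [DecidableEq σ]
    {i j : σ} (hij : i ≠ j) {N k₁ k₂ : ℕ} {a₁ a₂ b₁ b₂ : R} (hk₂ : k₂ < N)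
    (hb : b₁ * b₂ = 2)
    (hid : (C a₁ * X i + C a₂ * X j : MvPolynomial σ R) ^ (N + 1) =
      C (a₁ ^ (N + 1)) * X i ^ (k₁ + 1) * (X i + C b₁ * X j) ^ (N - k₁) +
      C (a₂ ^ (N + 1)) * X j ^ (k₂ + 1) * (X j + C b₂ * X i) ^ (N - k₂)) :
    (a₁ - a₂ * b₂) ^ (N + 1) = (-1) ^ (N - k₁) * a₁ ^ (N + 1) := by
  have h := congrArg (eval fun k => if k = i then 1 else -b₂) hid
  simp only [map_add, map_mul, map_pow, eval_C, eval_X, if_true, if_neg hij.symm] at h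
  have hvanish : (-b₂ + b₂ * 1) ^ (N - k₂) = 0 := by
    rw [neg_add_eq_zero.mpr (mul_one b₂).symm, zero_pow (Nat.sub_ne_zero_of_lt hk₂)]
  have hbase : 1 + b₁ * -b₂ = -1 := by rw [mul_neg, hb]; norm_num
  rw [hvanish, hbase] at h
  linear_combination h

theorem eq_zero_and_eq_zero_of_mul_eq_two {K : Type*} [CommRing K] [IsDomain K] [CharZero K]
    {a₁ a₂ b₁ b₂ : K} (hb : b₁ * b₂ = 2) (h₁ : a₁ - a₂ * b₂ = a₁ ∨ a₁ - a₂ * b₂ = -a₁)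
    (h₂ : a₂ - a₁ * b₁ = a₂ ∨ a₂ - a₁ * b₁ = -a₂) : a₁ = 0 ∧ a₂ = 0 := by
  grind

theorem stmt_11_general (N : ℕ) (k₁ k₂ : ℕ) (hk₁ : k₁ < N) (hk₂ : k₂ < N)
    (a₁ a₂ b₁ b₂ : ℚ) (hb : b₁ * b₂ = 2)
    (hid : (C a₁ * X 0 + C a₂ * X 1 : MvPolynomial (Fin 2) ℚ) ^ (N + 1) =
      C (a₁ ^ (N + 1)) * X 0 ^ (k₁ + 1) * (X 0 + C b₁ * X 1) ^ (N - k₁) +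
      C (a₂ ^ (N + 1)) * X 1 ^ (k₂ + 1) * (X 1 + C b₂ * X 0) ^ (N - k₂)) :
    a₁ = 0 ∧ a₂ = 0 := by
  have hid' : (C a₂ * X 1 + C a₁ * X 0 : MvPolynomial (Fin 2) ℚ) ^ (N + 1) =
      C (a₂ ^ (N + 1)) * X 1 ^ (k₂ + 1) * (X 1 + C b₂ * X 0) ^ (N - k₂) +
      C (a₁ ^ (N + 1)) * X 0 ^ (k₁ + 1) * (X 0 + C b₁ * X 1) ^ (N - k₁) := by
    rw [add_comm, hid, add_comm]
  have e₁ := sub_mul_pow_eq_neg_one_pow_mul_pow zero_ne_one hk₂ hb hid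
  have e₂ := sub_mul_pow_eq_neg_one_pow_mul_pow zero_ne_one.symm hk₁
    (by rw [mul_comm, hb]) hid'
  exact eq_zero_and_eq_zero_of_mul_eq_two hb
    (eq_or_eq_neg_of_pow_eq_neg_one_pow_mul N.succ_ne_zero _ e₁)
    (eq_or_eq_neg_of_pow_eq_neg_one_pow_mul N.succ_ne_zero _ e₂)

/-- Case 2 of Lemma 7.4: for N ≥ 2, k_1, k_2 < N, rationals a_1, a_2 and nonzero
rationals b_1, b_2 with b_1 b_2 = 2, the polynomial identity
(a_1 Y_1 + a_2 Y_2)^{N+1}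
  = a_1^{N+1} Y_1^{k_1+1}(Y_1 + b_1 Y_2)^{N-k_1}
  + a_2^{N+1} Y_2^{k_2+1}(Y_2 + b_2 Y_1)^{N-k_2}
forces a_1 = a_2 = 0. -/
theorem stmt_11 (N : ℕ) (hN : 2 ≤ N) (k₁ k₂ : ℕ) (hk₁ : k₁ < N) (hk₂ : k₂ < N)
    (a₁ a₂ b₁ b₂ : ℚ) (hb₁ : b₁ ≠ 0) (hb₂ : b₂ ≠ 0) (hb : b₁ * b₂ = 2)
    (hid : (C a₁ * X 0 + C a₂ * X 1 : MvPolynomial (Fin 2) ℚ) ^ (N + 1) =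
      C (a₁ ^ (N + 1)) * X 0 ^ (k₁ + 1) * (X 0 + C b₁ * X 1) ^ (N - k₁) +
      C (a₂ ^ (N + 1)) * X 1 ^ (k₂ + 1) * (X 1 + C b₂ * X 0) ^ (N - k₂)) :
    a₁ = 0 ∧ a₂ = 0 :=
  stmt_11_general N k₁ k₂ hk₁ hk₂ a₁ a₂ b₁ b₂ hb hid
end

section
/- Let K = (S¹)^m act on X = ∏_{i=1}^m S^{2n_i+1} ⊂ ∏_{i=1}^m ℂ^{n_i+1} by (g_1,...,g_m)·(z^i_0, z^i_1, ..., z^i_{n_i})_{i=1..m} = (g_i z^i_0, (∏_k g_k^{a^i_{k1}}) z^i_1, ..., (∏_k g_k^{a^i_{k n_i}}) z^i_{n_i})_{i=1..m}, where A = (a^i_{kj}) is the associated vector matrix. If all principal minors of A are ±1, then this action is free. -/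
/-!
Indices `i` with `z^i_0 ≠ 0` force `g_i = 1`. On the remaining set `S` every `z^i` has a nonzero
coordinate `z^i_{J_i}`, so the fixed-point equations give `∏_{k ∈ S} g_k ^ a^i_{k J_i} = 1` for
`i ∈ S`. The principal submatrix of `A_J` on `S` has determinant `±1`, hence an inverse over `ℤ`,
and raising these equations to the entries of that inverse yields `g_k = 1` on `S`.
-/

open Finset

theorem zpow_sum {G ι : Type*} [CommGroup G] (u : G) (s : Finset ι) (f : ι → ℤ) :
    u ^ (∑ i ∈ s, f i) = ∏ i ∈ s, u ^ f i :=
  cons_induction (by simp) (fun _ _ _ ih ↦ by simp [prod_cons, sum_cons, zpow_add, ih]) s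

theorem prod_zpow_mul_apply {G ι : Type*} [CommGroup G] [Fintype ι] (u : ι → G)
    (B C : Matrix ι ι ℤ) (l : ι) :
    ∏ k, u k ^ (B * C) k l = ∏ i, (∏ k, u k ^ B k i) ^ C i l := by
  simp only [Matrix.mul_apply, zpow_sum, zpow_mul, ← prod_zpow]
  exact prod_comm

theorem eq_one_of_prod_zpow_eq_one {G ι : Type*} [CommGroup G] [Fintype ι] [DecidableEq ι]
    {B : Matrix ι ι ℤ} (hB : IsUnit B.det) {u : ι → G} (h : ∀ i, ∏ k, u k ^ B k i = 1) :
    u = 1 := by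
  obtain ⟨C, hC⟩ := ((Matrix.isUnit_iff_isUnit_det B).mpr hB).exists_right_inv
  funext l
  calc u l = ∏ k, u k ^ (B * C) k l := by simp [hC, Matrix.one_apply]
    _ = 1 := by simp [prod_zpow_mul_apply, h]

theorem Fin.exists_succ_ne_zero {M : Type*} [Zero M] {n : ℕ} {z : Fin (n + 1) → M}
    (hz : z ≠ 0) (h0 : z 0 = 0) : ∃ j : Fin n, z j.succ ≠ 0 := by
  by_contra! h
  exact hz (funext fun p ↦ Fin.cases h0 h p)

/-- Lemma 4.3: the action of K = (S¹)^m on X = ∏ S^{2n_i+1} given by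
(g·z)^i_0 = g_i z^i_0 and (g·z)^i_j = (∏_k g_k^{a^i_{kj}}) z^i_j (j ≥ 1)
is free provided all principal minors of the vector matrix A = (a^i_k) are ±1.
Freeness: any g fixing some point z of X is the identity. -/
theorem stmt_18 (m : ℕ) (n : Fin m → ℕ) (hn : ∀ i, 1 ≤ n i)
    (a : Fin m → (i : Fin m) → Fin (n i) → ℤ)
    (hminor : ∀ (J : ∀ i : Fin m, Fin (n i)) (S : Finset (Fin m)), S.Nonempty →
      (Matrix.det (Matrix.of fun k i : {x // x ∈ S} =>
        a (k : Fin m) (i : Fin m) (J i)) = 1 ∨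
       Matrix.det (Matrix.of fun k i : {x // x ∈ S} =>
        a (k : Fin m) (i : Fin m) (J i)) = -1))
    (g : Fin m → ℂ) (hg : ∀ k, ‖g k‖ = 1)
    (z : (i : Fin m) → Fin (n i + 1) → ℂ)
    (hz : ∀ i, ∑ p, ‖z i p‖ ^ 2 = 1)
    (hfix0 : ∀ i : Fin m, g i * z i 0 = z i 0)
    (hfix : ∀ (i : Fin m) (j : Fin (n i)),
      (∏ k, g k ^ a k i j) * z i j.succ = z i j.succ) :
    ∀ k, g k = 1 := by
  classical
  have hg0 : ∀ k, g k ≠ 0 := fun k h ↦ by simpa [h] using hg k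
  have hz0 : ∀ i, z i ≠ 0 := fun i h ↦ by simpa [h] using hz i
  set S := univ.filter fun i ↦ z i 0 = 0
  have hg_notMem : ∀ k ∉ S, g k = 1 := fun k hk ↦
    (mul_eq_right₀ (by simpa [S] using hk)).mp (hfix0 k)
  have hJ : ∀ i, ∃ j : Fin (n i), i ∈ S → z i j.succ ≠ 0 := fun i ↦ by
    by_cases hi : i ∈ S
    · obtain ⟨j, hj⟩ := Fin.exists_succ_ne_zero (hz0 i) (mem_filter.mp hi).2
      exact ⟨j, fun _ ↦ hj⟩
    · exact ⟨⟨0, hn i⟩, fun h ↦ absurd h hi⟩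
  choose J hJ using hJ
  have hcol : ∀ i ∈ S, ∏ k ∈ S, g k ^ a k i (J i) = 1 := fun i hi ↦ by
    rw [prod_subset (subset_univ S) fun k _ hk ↦ by rw [hg_notMem k hk, one_zpow]]
    exact (mul_eq_right₀ (hJ i hi)).mp (hfix i (J i))
  refine fun k ↦ if hk : k ∈ S then ?_ else hg_notMem k hk
  have hu := eq_one_of_prod_zpow_eq_one (G := ℂˣ) (u := fun k : S ↦ Units.mk0 (g k) (hg0 k))
    (Int.isUnit_iff.mpr (hminor J S ⟨k, hk⟩)) fun i ↦ Units.ext <| by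
      push_cast
      exact (prod_coe_sort S fun k ↦ g k ^ a k i (J i)).trans (hcol i i.2)
  simpa using congrArg Units.val (congrFun hu ⟨k, hk⟩)
end

section
/- Let R = ℤ[y_1, ..., y_m]/(g_1, ..., g_m) where g_k = y_k ∏_{j=1}^{n_k}(∑_i a^k_{ij} y_i) with integer coefficients a^k_{ij} and a^k_{kj} = 1 for all j. Fix an index r and let g_k' denote g_k with y_r set to 0. Then the natural surjection ℤ[y_1,...,ŷ_r,...,y_m]/(g_1',...,ĝ_r',...,g_m') → R/(y_r) is an isomorphism. -/
/-!
Substituting `y_r = 0` is a retraction of `ℤ[y]` onto `ℤ[y_i : i ≠ r]` whose kernel is `(y_r)`,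
so it identifies `ℤ[y] ⧸ (J + (y_r))` with `ℤ[y_i : i ≠ r]` modulo the image of `J`, for any
ideal `J`. For `J = (g_1, …, g_m)` that image is generated by the `g_k'`, and `g_r' = 0` because
`y_r` divides `g_r`.
-/

open MvPolynomial

namespace MvPolynomial

variable {R σ : Type*} [CommRing R] [DecidableEq σ]

noncomputable def killVar (r : σ) : MvPolynomial σ R →ₐ[R] MvPolynomial {i // i ≠ r} R :=
  aeval fun i => if h : i = r then 0 else X ⟨i, h⟩

@[simp]
theorem killVar_X_self (r : σ) : killVar r (X r : MvPolynomial σ R) = 0 := by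
  simp [killVar]

@[simp]
theorem killVar_X_val {r : σ} (i : {i // i ≠ r}) :
    killVar r (X i.1 : MvPolynomial σ R) = X i := by
  simp [killVar, i.2]

theorem rename_killVar_sub_mem_span (r : σ) (p : MvPolynomial σ R) :
    rename Subtype.val (killVar r p) - p ∈ Ideal.span {X r} := by
  rw [← Ideal.Quotient.eq]
  change ((Ideal.Quotient.mkₐ R _).comp ((rename Subtype.val).comp (killVar r))) p =
    Ideal.Quotient.mkₐ R _ p
  congr 1
  refine algHom_ext fun i => ?_
  by_cases h : i = r
  · subst h
    simp
  · simp [killVar, h]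

variable (J : Ideal (MvPolynomial σ R)) (r : σ)

theorem mk_sup_span_X_rename_killVar (p : MvPolynomial σ R) :
    Ideal.Quotient.mk (J ⊔ Ideal.span {X r}) (rename Subtype.val (killVar r p)) =
      Ideal.Quotient.mk _ p :=
  Ideal.Quotient.eq.2 (Ideal.mem_sup_right (rename_killVar_sub_mem_span r p))

theorem map_killVar_le_comap_rename :
    J.map (killVar r) ≤ (J ⊔ Ideal.span {X r}).comap (rename Subtype.val) := by
  refine Ideal.map_le_iff_le_comap.2 fun p hp => ?_
  rw [Ideal.mem_comap, Ideal.mem_comap, ← Ideal.Quotient.eq_zero_iff_mem,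
    mk_sup_span_X_rename_killVar, Ideal.Quotient.eq_zero_iff_mem]
  exact Ideal.mem_sup_left hp

theorem sup_span_X_le_comap_killVar :
    J ⊔ Ideal.span {X r} ≤ (J.map (killVar r)).comap (killVar r) := by
  refine sup_le Ideal.le_comap_map ((Ideal.span_le).2 ?_)
  simp

noncomputable def quotientMapKillVarEquiv :
    (MvPolynomial {i // i ≠ r} R ⧸ J.map (killVar r)) ≃ₐ[R]
      (MvPolynomial σ R ⧸ (J ⊔ Ideal.span {X r})) :=
  AlgEquiv.ofAlgHom
    (Ideal.quotientMapₐ _ (rename Subtype.val) (map_killVar_le_comap_rename J r))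
    (Ideal.quotientMapₐ _ (killVar r) (sup_span_X_le_comap_killVar J r))
    (by
      refine Ideal.Quotient.algHom_ext _ ?_
      rw [AlgHom.comp_assoc, Ideal.quotient_map_comp_mkₐ, ← AlgHom.comp_assoc,
        Ideal.quotient_map_comp_mkₐ]
      exact algHom_ext fun i => mk_sup_span_X_rename_killVar J r (X i))
    (by
      refine Ideal.Quotient.algHom_ext _ ?_
      rw [AlgHom.comp_assoc, Ideal.quotient_map_comp_mkₐ, ← AlgHom.comp_assoc,
        Ideal.quotient_map_comp_mkₐ]
      exact algHom_ext fun i => by simp)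

@[simp]
theorem quotientMapKillVarEquiv_mk_X (i : {i // i ≠ r}) :
    quotientMapKillVarEquiv J r (Ideal.Quotient.mk _ (X i)) = Ideal.Quotient.mk _ (X i.1) := by
  simp [quotientMapKillVarEquiv]

end MvPolynomial

theorem stmt_19_general (m : ℕ) (n : Fin m → ℕ)
    (a : (k : Fin m) → Fin m → Fin (n k) → ℤ)
    (r : Fin m)
    (ψ : MvPolynomial (Fin m) ℤ →ₐ[ℤ] MvPolynomial {i : Fin m // i ≠ r} ℤ)
    (hψ : ψ = aeval fun i : Fin m =>
      if h : i = r then 0 else X (⟨i, h⟩ : {i : Fin m // i ≠ r}))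
    (g : Fin m → MvPolynomial (Fin m) ℤ)
    (hg : ∀ k, g k = X k * ∏ j : Fin (n k), ∑ i : Fin m, C (a k i j) * X i)
    (I : Ideal (MvPolynomial (Fin m) ℤ))
    (hI : I = Ideal.span ({p | ∃ k : Fin m, p = g k} ∪ {X r}))
    (I' : Ideal (MvPolynomial {i : Fin m // i ≠ r} ℤ))
    (hI' : I' = Ideal.span {p | ∃ k : Fin m, k ≠ r ∧ p = ψ (g k)}) :
    ∃ e : (MvPolynomial {i : Fin m // i ≠ r} ℤ ⧸ I') ≃+*
        (MvPolynomial (Fin m) ℤ ⧸ I),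
      ∀ i : {i : Fin m // i ≠ r},
        e (Ideal.Quotient.mk I' (X i)) = Ideal.Quotient.mk I (X i.1) := by
  obtain rfl : ψ = killVar r := hψ
  have hgr : killVar r (g r) = 0 := by rw [hg, map_mul, killVar_X_self, zero_mul]
  obtain rfl : I = Ideal.span (Set.range g) ⊔ Ideal.span {X r} := by
    rw [hI, Ideal.span_union]
    simp_rw [Set.range, eq_comm]
  obtain rfl : I' = (Ideal.span (Set.range g)).map (killVar r) := by
    rw [hI', Ideal.map_span]
    refine le_antisymm (Ideal.span_mono ?_) (Ideal.span_le.2 ?_)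
    · rintro _ ⟨k, -, rfl⟩
      exact ⟨g k, ⟨k, rfl⟩, rfl⟩
    · rintro _ ⟨_, ⟨k, rfl⟩, rfl⟩
      by_cases hk : k = r
      · simp [hk, hgr]
      · exact Ideal.subset_span ⟨k, hk, rfl⟩
  exact ⟨(quotientMapKillVarEquiv _ r).toRingEquiv, quotientMapKillVarEquiv_mk_X _ r⟩

/-- Lemma 7.5 ("restr"): with R = ℤ[y_1,...,y_m]/(g_1,...,g_m), where
g_k = y_k ∏_{j=1}^{n_k}(∑_i a^k_{ij} y_i) and a^k_{kj} = 1, and with g_k'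
denoting g_k with y_r set to 0, the natural surjection
ℤ[y_1,...,ŷ_r,...,y_m]/(g_1',...,ĝ_r',...,g_m') → R/(y_r) is an isomorphism. -/
theorem stmt_19 (m : ℕ) (n : Fin m → ℕ) (hn : ∀ k, 1 ≤ n k)
    (a : (k : Fin m) → Fin m → Fin (n k) → ℤ)
    (ha : ∀ k j, a k k j = 1)
    (r : Fin m)
    (ψ : MvPolynomial (Fin m) ℤ →ₐ[ℤ] MvPolynomial {i : Fin m // i ≠ r} ℤ)
    (hψ : ψ = aeval fun i : Fin m =>
      if h : i = r then 0 else X (⟨i, h⟩ : {i : Fin m // i ≠ r}))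
    (g : Fin m → MvPolynomial (Fin m) ℤ)
    (hg : ∀ k, g k = X k * ∏ j : Fin (n k), ∑ i : Fin m, C (a k i j) * X i)
    (I : Ideal (MvPolynomial (Fin m) ℤ))
    (hI : I = Ideal.span ({p | ∃ k : Fin m, p = g k} ∪ {X r}))
    (I' : Ideal (MvPolynomial {i : Fin m // i ≠ r} ℤ))
    (hI' : I' = Ideal.span {p | ∃ k : Fin m, k ≠ r ∧ p = ψ (g k)}) :
    ∃ e : (MvPolynomial {i : Fin m // i ≠ r} ℤ ⧸ I') ≃+*
        (MvPolynomial (Fin m) ℤ ⧸ I),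
      ∀ i : {i : Fin m // i ≠ r},
        e (Ideal.Quotient.mk I' (X i)) = Ideal.Quotient.mk I (X i.1) :=
  stmt_19_general m n a r ψ hψ g hg I hI I' hI'
end
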